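/- On a hypercomplex manifold, for any 1-form θ the Salamon differential satisfies Dθ = (dθ)^{2,0} + (dθ)^{0,2} + ½((dθ)^{1,1} − J(dθ)^{1,1}), where the type decomposition of dθ is taken with respect to the complex structure I. -/

import Mathlib

noncomputable section

open Function

namespace HKTPaper

variable {E : Type*} [NormedAddCommGroup E] [NormedSpace ℝ E] [FiniteDimensional ℝ E]

/-- Exterior derivative of a function, in flat coordinates. -/
def d0 (f : E → ℝ) : E → E → ℝ := fun x u => fderiv ℝ f x u

/-- Exterior derivative of a 1-form (evaluated on constant vector fields), flat coordinates. -/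
def d1 (θ : E → E → ℝ) : E → E → E → ℝ := fun x u v =>
  fderiv ℝ (fun y => θ y v) x u - fderiv ℝ (fun y => θ y u) x v

/-- Exterior derivative of a 2-form, flat coordinates. -/
def d2 (F : E → E → E → ℝ) : E → E → E → E → ℝ := fun x u v w =>
  fderiv ℝ (fun y => F y v w) x u - fderiv ℝ (fun y => F y u w) x v
    + fderiv ℝ (fun y => F y u v) x w

variable {P : Type*}

/-- Action of an almost complex structure on 1-forms: `(𝓘θ)(X) = -θ(𝓘X)`. -/
def act1 (I : P → E →L[ℝ] E) (θ : P → E → ℝ) : P → E → ℝ := fun x u => -θ x (I x u)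

/-- Action of an almost complex structure on 2-forms: `(𝓘ω)(X,Y) = ω(𝓘X,𝓘Y)`. -/
def act2 (I : P → E →L[ℝ] E) (F : P → E → E → ℝ) : P → E → E → ℝ := fun x u v =>
  F x (I x u) (I x v)

/-- Action of an almost complex structure on 3-forms: `(𝓘ω)(X,Y,Z) = -ω(𝓘X,𝓘Y,𝓘Z)`. -/
def act3 (I : P → E →L[ℝ] E) (G : P → E → E → E → ℝ) : P → E → E → E → ℝ := fun x u v w =>
  -G x (I x u) (I x v) (I x w)

/-- `d_𝓘` on functions: `d_𝓘 f = 𝓘 d (𝓘 f)`. -/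
def dc0 (I : E → E →L[ℝ] E) (f : E → ℝ) : E → E → ℝ := act1 I (d0 f)

/-- `d_𝓘` on 1-forms: `d_𝓘 θ = (-1)¹ 𝓘 d (𝓘 θ)`. -/
def dc1 (I : E → E →L[ℝ] E) (θ : E → E → ℝ) : E → E → E → ℝ := fun x u v =>
  -(act2 I (d1 (act1 I θ)) x u v)

/-- Lie bracket of vector fields, flat coordinates. -/
def lieBracket (X Y : E → E) : E → E := fun x => fderiv ℝ Y x (X x) - fderiv ℝ X x (Y x)

/-- Nijenhuis tensor `N(X,Y) = [𝓘X,𝓘Y] - 𝓘[𝓘X,Y] - 𝓘[X,𝓘Y] - [X,Y]` evaluated on the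
constant vector fields with values `u`, `v`. -/
def nijTensor (I : E → E →L[ℝ] E) (u v : E) : E → E := fun x =>
  lieBracket (fun y => I y u) (fun y => I y v) x
    - I x (lieBracket (fun y => I y u) (fun _ => v) x)
    - I x (lieBracket (fun _ => u) (fun y => I y v) x)
    - lieBracket (fun _ => u) (fun _ => v) x

/-- An almost complex structure on an open set `U`. -/
structure IsAcsOn (U : Set E) (I : E → E →L[ℝ] E) : Prop where
  smooth : ContDiffOn ℝ (⊤ : ℕ∞) I U
  square : ∀ x ∈ U, ∀ v, I x (I x v) = -v

/-- Integrability (vanishing of the Nijenhuis tensor). -/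
def IntegrableOn (U : Set E) (I : E → E →L[ℝ] E) : Prop :=
  ∀ u v : E, ∀ x ∈ U, nijTensor I u v x = 0

/-- A hypercomplex structure on an open set `U`: three integrable almost complex structures
with `IJ = -JI = K`. -/
structure IsHypercomplexOn (U : Set E) (I J K : E → E →L[ℝ] E) : Prop where
  acsI : IsAcsOn U I
  acsJ : IsAcsOn U J
  acsK : IsAcsOn U K
  mulIJ : ∀ x ∈ U, ∀ v, I x (J x v) = K x v
  mulJI : ∀ x ∈ U, ∀ v, J x (I x v) = -(K x v)
  intI : IntegrableOn U I
  intJ : IntegrableOn U J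
  intK : IntegrableOn U K

/-- A hyperhermitian (possibly indefinite) metric on `U`. -/
structure IsHyperHermitianOn (U : Set E) (I J K : E → E →L[ℝ] E)
    (g : E → E →ₗ[ℝ] E →ₗ[ℝ] ℝ) : Prop where
  smooth : ∀ u v : E, ContDiffOn ℝ (⊤ : ℕ∞) (fun x => g x u v) U
  symm : ∀ x ∈ U, ∀ u v, g x u v = g x v u
  nondeg : ∀ x ∈ U, ∀ u, (∀ v, g x u v = 0) → u = 0
  hermI : ∀ x ∈ U, ∀ u v, g x (I x u) (I x v) = g x u v
  hermJ : ∀ x ∈ U, ∀ u v, g x (J x u) (J x v) = g x u v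
  hermK : ∀ x ∈ U, ∀ u v, g x (K x u) (K x v) = g x u v

/-- The Kähler form `F_𝓘 = g(𝓘·,·)`. -/
def kaehlerForm (I : E → E →L[ℝ] E) (g : E → E →ₗ[ℝ] E →ₗ[ℝ] ℝ) : E → E → E → ℝ :=
  fun x u v => g x (I x u) v

/-- The HKT condition `I dF_I = J dF_J = K dF_K` on `U`. -/
def IsHKTOn (U : Set E) (I J K : E → E →L[ℝ] E) (g : E → E →ₗ[ℝ] E →ₗ[ℝ] ℝ) : Prop :=
  (∀ x ∈ U, ∀ u v w, act3 I (d2 (kaehlerForm I g)) x u v w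
      = act3 J (d2 (kaehlerForm J g)) x u v w) ∧
  (∀ x ∈ U, ∀ u v w, act3 J (d2 (kaehlerForm J g)) x u v w
      = act3 K (d2 (kaehlerForm K g)) x u v w)

/-- `μ` is an HKT potential for `g` on `U`:
`F_I = ½(dd_I + d_J d_K)μ`, `F_J = ½(dd_J + d_K d_I)μ`, `F_K = ½(dd_K + d_I d_J)μ`. -/
def IsHKTPotentialOn (U : Set E) (I J K : E → E →L[ℝ] E)
    (g : E → E →ₗ[ℝ] E →ₗ[ℝ] ℝ) (μ : E → ℝ) : Prop :=
  ∀ x ∈ U, ∀ u v,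
    kaehlerForm I g x u v = (1 / 2) * (d1 (dc0 I μ) x u v + dc1 J (dc0 K μ) x u v) ∧
    kaehlerForm J g x u v = (1 / 2) * (d1 (dc0 J μ) x u v + dc1 K (dc0 I μ) x u v) ∧
    kaehlerForm K g x u v = (1 / 2) * (d1 (dc0 K μ) x u v + dc1 I (dc0 J μ) x u v)

end HKTPaper

namespace HKTPaper

variable {E : Type*} [NormedAddCommGroup E] [NormedSpace ℝ E] [FiniteDimensional ℝ E]

/-- The complex structure `aI + bJ + cK` at the point `x`. -/
def unitCombo (I J K : E → E →L[ℝ] E) (a b c : ℝ) (x : E) : E →L[ℝ] E :=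
  a • I x + b • J x + c • K x

/-- Pointwise membership in `A² = Σ_{𝓘 ∈ S²} (Λ^{2,0}_𝓘 ⊕ Λ^{0,2}_𝓘)`: the span of the
alternating bilinear forms `φ` with `φ(𝓘·,𝓘·) = -φ` for some `𝓘 ∈ S²`. -/
def InA2Pt (I J K : E → E →L[ℝ] E) (x : E) (ψ : E → E → ℝ) : Prop :=
  ψ ∈ Submodule.span ℝ {φ : E → E → ℝ |
    (∃ B : E →ₗ[ℝ] E →ₗ[ℝ] ℝ, (∀ u v, φ u v = B u v) ∧ ∀ u, B u u = 0) ∧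
    ∃ a b c : ℝ, a ^ 2 + b ^ 2 + c ^ 2 = 1 ∧
      ∀ u v, φ (unitCombo I J K a b c x u) (unitCombo I J K a b c x v) = -φ u v}

/-- Pointwise membership in `B² = ∩_{𝓘 ∈ S²} Λ^{1,1}_𝓘`: invariance `ψ(𝓘·,𝓘·) = ψ`
under every `𝓘 ∈ S²`. -/
def InB2Pt (I J K : E → E →L[ℝ] E) (x : E) (ψ : E → E → ℝ) : Prop :=
  ∀ a b c : ℝ, a ^ 2 + b ^ 2 + c ^ 2 = 1 →
    ∀ u v, ψ (unitCombo I J K a b c x u) (unitCombo I J K a b c x v) = ψ u v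

/-- `G = Dθ` on `U` for a 1-form `θ`, where `D = η ∘ d` is the Salamon differential:
`G` is a section of `A²` and `dθ - G` is a section of `B² = ker η`. -/
def IsSalamonDOn (U : Set E) (I J K : E → E →L[ℝ] E)
    (θ : E → E → ℝ) (G : E → E → E → ℝ) : Prop :=
  (∀ x ∈ U, InA2Pt I J K x (G x)) ∧
  (∀ x ∈ U, InB2Pt I J K x (fun u v => d1 θ x u v - G x u v))

/-- The `(1,1)`-part of a 2-form with respect to `I`: `ω^{1,1} = ½(ω + Iω)`. -/
def part11 (I : E → E →L[ℝ] E) (ω : E → E → E → ℝ) : E → E → E → ℝ := fun x u v =>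
  (1 / 2) * (ω x u v + ω x (I x u) (I x v))

/-!
At a point, `dθ` is an alternating bilinear form `ω`; write `ω_𝓘 = ω(𝓘·,𝓘·)`. The right-hand
side equals `½(ω - ω_I) + ¼(ω' - ω'_J)` with `ω' = ω + ω_I`: an `I`-anti-invariant plus a
`J`-anti-invariant alternating form, hence a section of `A²`. The remainder `¼(ω' + ω'_J)` is
invariant under `I` and `J`. For a complex structure `𝓘`, invariance `ψ(𝓘·,𝓘·) = ψ` is equivalent
to `𝓘` being `ψ`-skew-adjoint; skew-adjoint endomorphisms form a linear space, and `aI + bJ + cK`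
squares to `-1` when `a² + b² + c² = 1`, so the remainder is invariant under all of `S²`.
-/

end HKTPaper

namespace LinearMap

variable {R M : Type*} [CommRing R] [AddCommGroup M] [Module R M]

theorem isOrthogonal_iff_isSkewAdjoint {B : LinearMap.BilinForm R M} {f : M → M}
    (hf : ∀ v, f (f v) = -v) : B.IsOrthogonal f ↔ B.IsSkewAdjoint f := by
  constructor
  · intro h u v
    rw [← h, hf, Pi.neg_apply, map_neg, neg_apply, map_neg]
  · intro h u v
    rw [h, Pi.neg_apply, hf, neg_neg]

theorem isOrthogonal_add_compl₁₂_self (B : LinearMap.BilinForm R M) {f : M →ₗ[R] M}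
    (hf : ∀ v, f (f v) = -v) : (B + B.compl₁₂ f f).IsOrthogonal f := by
  intro u v
  simp only [add_apply, compl₁₂_apply, hf, map_neg, neg_apply, neg_neg, add_comm]

theorem sub_compl₁₂_self_apply_apply (B : LinearMap.BilinForm R M) {f : M →ₗ[R] M}
    (hf : ∀ v, f (f v) = -v) (u v : M) :
    (B - B.compl₁₂ f f) (f u) (f v) = -(B - B.compl₁₂ f f) u v := by
  simp only [sub_apply, compl₁₂_apply, hf, map_neg, neg_apply, neg_neg, neg_sub]

theorem IsOrthogonal.add {B C : LinearMap.BilinForm R M} {f : M → M} (hB : B.IsOrthogonal f)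
    (hC : C.IsOrthogonal f) : (B + C).IsOrthogonal f := fun u v => by
  simp only [add_apply, hB u v, hC u v]

theorem IsOrthogonal.compl₁₂_of_anticomm {B : LinearMap.BilinForm R M} {f : M → M}
    (hB : B.IsOrthogonal f) {g : M →ₗ[R] M} (hfg : ∀ v, g (f v) = -f (g v)) :
    (B.compl₁₂ g g).IsOrthogonal f := by
  intro u v
  simp only [compl₁₂_apply, hfg, map_neg, neg_apply, neg_neg]
  exact hB _ _

end LinearMap

namespace HKTPaper

section Quaternionic

variable {V : Type*} [AddCommGroup V] [Module ℝ V]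

structure IsQuaternionTriple (i j k : V →ₗ[ℝ] V) : Prop where
  sq_i : ∀ v, i (i v) = -v
  sq_j : ∀ v, j (j v) = -v
  mul_ij : ∀ v, i (j v) = k v
  mul_ji : ∀ v, j (i v) = -k v

namespace IsQuaternionTriple

variable {i j k : V →ₗ[ℝ] V}

theorem sq_k (h : IsQuaternionTriple i j k) (v : V) : k (k v) = -v :=
  calc k (k v) = i (j (i (j v))) := by rw [h.mul_ij, h.mul_ij]
    _ = -v := by simp only [h.mul_ji, ← h.mul_ij, h.sq_j, map_neg, neg_neg, h.sq_i]

theorem combo_sq (h : IsQuaternionTriple i j k) {a b c : ℝ} (habc : a ^ 2 + b ^ 2 + c ^ 2 = 1)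
    (v : V) : (a • i + b • j + c • k) ((a • i + b • j + c • k) v) = -v := by
  have hik : ∀ v, i (k v) = -j v := fun v => by rw [← h.mul_ij, h.sq_i]
  have hki : ∀ v, k (i v) = j v := fun v => by
    rw [← h.mul_ij, h.mul_ji, map_neg, hik, neg_neg]
  have hjk : ∀ v, j (k v) = i v := fun v => by
    rw [← h.mul_ij, h.mul_ji, ← h.mul_ij, h.sq_j, map_neg, neg_neg]
  have hkj : ∀ v, k (j v) = -i v := fun v => by rw [← h.mul_ij, h.sq_j, map_neg]
  simp only [LinearMap.add_apply, LinearMap.smul_apply, map_add, map_smul, h.sq_i, h.sq_j,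
    h.sq_k, h.mul_ij, h.mul_ji, hik, hki, hjk, hkj]
  linear_combination (norm := module) -(habc • v)

theorem anticomm (h : IsQuaternionTriple i j k) (v : V) : j (i v) = -i (j v) := by
  rw [h.mul_ji, h.mul_ij]

theorem isOrthogonal_combo (h : IsQuaternionTriple i j k) {B : LinearMap.BilinForm ℝ V}
    (hi : B.IsOrthogonal i) (hj : B.IsOrthogonal j) {a b c : ℝ}
    (habc : a ^ 2 + b ^ 2 + c ^ 2 = 1) : B.IsOrthogonal (a • i + b • j + c • k) := by
  have hk : B.IsOrthogonal k := fun u v => by rw [← h.mul_ij, ← h.mul_ij, hi, hj]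
  have skew : ∀ f : V →ₗ[ℝ] V, (∀ v, f (f v) = -v) → B.IsOrthogonal f →
      f ∈ B.skewAdjointSubmodule := fun f hf hB =>
    (LinearMap.mem_skewAdjointSubmodule f).2 ((LinearMap.isOrthogonal_iff_isSkewAdjoint hf).1 hB)
  have hL : a • i + b • j + c • k ∈ B.skewAdjointSubmodule :=
    add_mem (add_mem (Submodule.smul_mem _ a (skew i h.sq_i hi))
      (Submodule.smul_mem _ b (skew j h.sq_j hj))) (Submodule.smul_mem _ c (skew k h.sq_k hk))
  exact (LinearMap.isOrthogonal_iff_isSkewAdjoint (h.combo_sq habc)).2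
    ((LinearMap.mem_skewAdjointSubmodule _).1 hL)

end IsQuaternionTriple

end Quaternionic

section PointwiseForms

variable {E : Type*} [NormedAddCommGroup E] [NormedSpace ℝ E] {I J K : E → E →L[ℝ] E} {x : E}

theorem exists_isAlt_d1_eq {θ : E → E →ₗ[ℝ] ℝ}
    (hθ : ∀ u, DifferentiableAt ℝ (fun y => θ y u) x) :
    ∃ B : LinearMap.BilinForm ℝ E, B.IsAlt ∧ ∀ u v, d1 (fun y w => θ y w) x u v = B u v := by
  let T : E →ₗ[ℝ] E →L[ℝ] ℝ :=
    { toFun := fun v => fderiv ℝ (fun y => θ y v) x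
      map_add' := fun v w => by simp only [map_add]; exact fderiv_fun_add (hθ v) (hθ w)
      map_smul' := fun c v => by simp only [map_smul]; exact fderiv_fun_const_smul (hθ v) c }
  let D : LinearMap.BilinForm ℝ E := (ContinuousLinearMap.coeLM ℝ).comp T
  exact ⟨D.flip - D, fun u => sub_self _, fun u v => rfl⟩

theorem IsHypercomplexOn.isQuaternionTriple {U : Set E} (h : IsHypercomplexOn U I J K)
    (hx : x ∈ U) : IsQuaternionTriple (I x : E →ₗ[ℝ] E) (J x) (K x) :=
  ⟨h.acsI.square x hx, h.acsJ.square x hx, h.mulIJ x hx, h.mulJI x hx⟩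

theorem unitCombo_one_zero_zero : unitCombo I J K 1 0 0 x = I x := by
  simp [unitCombo]

theorem unitCombo_zero_one_zero : unitCombo I J K 0 1 0 x = J x := by
  simp [unitCombo]

theorem inA2Pt_sub_compl₁₂ {B : LinearMap.BilinForm ℝ E} (hB : B.IsAlt) {a b c : ℝ}
    (habc : a ^ 2 + b ^ 2 + c ^ 2 = 1) {L : E →L[ℝ] E} (hL : unitCombo I J K a b c x = L)
    (hsq : ∀ v, L (L v) = -v) : InA2Pt I J K x (fun u v => B u v - B (L u) (L v)) := by
  refine Submodule.subset_span ⟨⟨B - B.compl₁₂ (L : E →ₗ[ℝ] E) L, fun _ _ => rfl, fun u => ?_⟩,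
    a, b, c, habc, ?_⟩
  · change B u u - B (L u) (L u) = 0
    rw [hB u, hB (L u), sub_zero]
  · rw [hL]
    exact B.sub_compl₁₂_self_apply_apply hsq

theorem inB2Pt_of_isOrthogonal (h : IsQuaternionTriple (I x : E →ₗ[ℝ] E) (J x) (K x))
    {B : LinearMap.BilinForm ℝ E} (hI : B.IsOrthogonal (I x)) (hJ : B.IsOrthogonal (J x)) :
    InB2Pt I J K x (fun u v => B u v) := fun _ _ _ habc =>
  h.isOrthogonal_combo hI hJ habc

def salamonFormula (I J : E → E →L[ℝ] E) (ω : E → E → E → ℝ) : E → E → E → ℝ :=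
  fun x u v => (ω x u v - part11 I ω x u v)
    + (1 / 2) * (part11 I ω x u v - act2 J (part11 I ω) x u v)

theorem inA2Pt_salamonFormula (hI : ∀ v, I x (I x v) = -v) (hJ : ∀ v, J x (J x v) = -v)
    {ω : E → E → E → ℝ} {B : LinearMap.BilinForm ℝ E} (hB : B.IsAlt)
    (hωB : ∀ u v, ω x u v = B u v) : InA2Pt I J K x (salamonFormula I J ω x) := by
  let B₁₁ := B + B.compl₁₂ (I x : E →ₗ[ℝ] E) (I x)
  have hB₁₁ : B₁₁.IsAlt := fun u => by
    simp only [B₁₁, LinearMap.add_apply, LinearMap.compl₁₂_apply, hB u, zero_add]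
    exact hB _
  have h₂₀ : InA2Pt I J K x (fun u v => B u v - B (I x u) (I x v)) :=
    inA2Pt_sub_compl₁₂ hB (by norm_num) unitCombo_one_zero_zero hI
  have h₁₁ : InA2Pt I J K x (fun u v => B₁₁ u v - B₁₁ (J x u) (J x v)) :=
    inA2Pt_sub_compl₁₂ hB₁₁ (by norm_num) unitCombo_zero_one_zero hJ
  rw [InA2Pt]
  convert add_mem (Submodule.smul_mem _ (1 / 2 : ℝ) h₂₀) (Submodule.smul_mem _ (1 / 4 : ℝ) h₁₁)
    using 1
  funext u v
  simp only [salamonFormula, part11, act2, hωB, B₁₁, Pi.add_apply, Pi.smul_apply, smul_eq_mul,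
    LinearMap.add_apply, LinearMap.compl₁₂_apply, ContinuousLinearMap.coe_coe]
  ring

theorem inB2Pt_sub_salamonFormula (h : IsQuaternionTriple (I x : E →ₗ[ℝ] E) (J x) (K x))
    {ω : E → E → E → ℝ} {B : LinearMap.BilinForm ℝ E} (hωB : ∀ u v, ω x u v = B u v) :
    InB2Pt I J K x (fun u v => ω x u v - salamonFormula I J ω x u v) := by
  let B₁₁ := (1 / 4 : ℝ) • B + ((1 / 4 : ℝ) • B).compl₁₂ (I x : E →ₗ[ℝ] E) (I x)
  have hI : B₁₁.IsOrthogonal (I x) := LinearMap.isOrthogonal_add_compl₁₂_self _ h.sq_i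
  convert inB2Pt_of_isOrthogonal h (hI.add (hI.compl₁₂_of_anticomm h.anticomm))
    (B₁₁.isOrthogonal_add_compl₁₂_self h.sq_j) using 1
  funext u v
  simp only [salamonFormula, part11, act2, hωB, B₁₁, LinearMap.add_apply, LinearMap.smul_apply,
    smul_eq_mul, LinearMap.compl₁₂_apply, ContinuousLinearMap.coe_coe]
  ring

end PointwiseForms

end HKTPaper

namespace HKTPaper

variable {E : Type*} [NormedAddCommGroup E] [NormedSpace ℝ E] [FiniteDimensional ℝ E]

/-- On a hypercomplex manifold, for any 1-form `θ` the Salamon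
differential satisfies
`Dθ = (dθ)^{2,0} + (dθ)^{0,2} + ½((dθ)^{1,1} - J(dθ)^{1,1})`,
the type decomposition of `dθ` being taken with respect to `I`
(so `(dθ)^{2,0} + (dθ)^{0,2} = dθ - (dθ)^{1,1}`). -/
theorem salamon_differential_of_one_form_formula
    (U : Set E) (hU : IsOpen U) (I J K : E → E →L[ℝ] E)
    (hhc : IsHypercomplexOn U I J K)
    (θ : E → E →ₗ[ℝ] ℝ)
    (hθsmooth : ∀ u : E, ContDiffOn ℝ (⊤ : ℕ∞) (fun x => θ x u) U) :
    IsSalamonDOn U I J K (fun x u => θ x u)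
      (fun x u v =>
        (d1 (fun y w => θ y w) x u v - part11 I (d1 fun y w => θ y w) x u v)
          + (1 / 2) * (part11 I (d1 fun y w => θ y w) x u v
              - act2 J (part11 I (d1 fun y w => θ y w)) x u v)) := by
  have hdθ : ∀ x ∈ U, ∃ B : LinearMap.BilinForm ℝ E, B.IsAlt ∧
      ∀ u v, d1 (fun y w => θ y w) x u v = B u v := fun x hx =>
    exists_isAlt_d1_eq fun u => ((hθsmooth u).contDiffAt (hU.mem_nhds hx)).differentiableAt
      (by simp)
  refine ⟨fun x hx => ?_, fun x hx => ?_⟩ <;> obtain ⟨B, hB, hdθB⟩ := hdθ x hx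
  · exact inA2Pt_salamonFormula (hhc.acsI.square x hx) (hhc.acsJ.square x hx) hB hdθB
  · exact inB2Pt_sub_salamonFormula (hhc.isQuaternionTriple hx) hdθB

end HKTPaper
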